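/- Let G be a finite group, let X and Y be compact Hausdorff based G-spaces with G-fixed basepoints, let H be a complex Hilbert space with a unitary representation u of G, and let G act on 𝔠(X) and 𝔠(Y) by (g·F)(f) = u(g) ∘ F(x ↦ f(g • x)) ∘ u(g)⁻¹. If φ₀, φ₁ : X → Y are based G-equivariant continuous maps that are G-homotopic through based G-equivariant maps, then the induced continuous maps 𝔠(φ₀), 𝔠(φ₁) : 𝔠(X) → 𝔠(Y), given by 𝔠(φᵢ)(F) = F ∘ φᵢ*, are G-homotopic: there is a continuous map Ĥ : 𝔠(X) × [0,1] → 𝔠(Y) with Ĥ(·, 0) = 𝔠(φ₀), Ĥ(·, 1) = 𝔠(φ₁), and Ĥ(g·F, t) = g·Ĥ(F, t) for all g ∈ G, F ∈ 𝔠(X), t ∈ [0,1]. -/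

import Mathlib

set_option synthInstance.maxHeartbeats 400000

noncomputable section

/-- The non-unital star subalgebra `C₀(X)` of `C(X, ℂ)` consisting of the continuous functions
vanishing at the basepoint `x₀`. -/
def zeroAt (X : Type*) [TopologicalSpace X] (x₀ : X) :
    NonUnitalStarSubalgebra ℂ C(X, ℂ) where
  carrier := {f | f x₀ = 0}
  add_mem' := by intro f g hf hg; simp_all [Set.mem_setOf_eq]
  zero_mem' := by simp
  mul_mem' := by intro f g hf hg; simp_all [Set.mem_setOf_eq]
  smul_mem' := by intro c f hf; simp_all [Set.mem_setOf_eq]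
  star_mem' := by intro f hf; simp_all [Set.mem_setOf_eq]

/-- `C₀(X)` for the based space `(X, x₀)`, with the sup-norm (compact-open) topology inherited
from `C(X, ℂ)`. -/
abbrev CZero (X : Type*) [TopologicalSpace X] (x₀ : X) : Type _ := ↥(zeroAt X x₀)

variable (H : Type*) [NormedAddCommGroup H] [InnerProductSpace ℂ H] [CompleteSpace H]

/-- A continuous map `F : C₀(X) → B(H)` (with `B(H)` carrying the weak operator topology) is a
*configuration* if it is a (not necessarily unital) star-algebra homomorphism of uniformly
bounded finite rank. -/
def IsConfig {X : Type*} [TopologicalSpace X] {x₀ : X}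
    (F : C(CZero X x₀, H →WOT[ℂ] H)) : Prop :=
  ∃ Φ : CZero X x₀ →⋆ₙₐ[ℂ] (H →L[ℂ] H),
    (∀ f, F f = (ContinuousLinearMapWOT.linearEquiv (σ := RingHom.id ℂ) (E := H) (F := H) ℂ).symm (Φ f)) ∧
    ∃ n : ℕ, ∀ f, ∃ V : Submodule ℂ H, FiniteDimensional ℂ V ∧
      Module.finrank ℂ V ≤ n ∧ LinearMap.range ((Φ f) : H →ₗ[ℂ] H) ≤ V

/-- The configuration space `𝔠(X)`: bounded-rank star-algebra homomorphisms
`C₀(X) → B(H)`, topologized as a subspace of `C(C₀(X), B(H))` with the compact-open topology,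
`B(H)` carrying the weak operator topology. -/
def Config (X : Type*) [TopologicalSpace X] (x₀ : X) : Type _ :=
  {F : C(CZero X x₀, H →WOT[ℂ] H) // IsConfig H F}

instance (X : Type*) [TopologicalSpace X] (x₀ : X) : TopologicalSpace (Config H X x₀) :=
  instTopologicalSpaceSubtype

/-- Pullback of functions vanishing at basepoints along a based continuous map. -/
def pullback {X Y : Type*} [TopologicalSpace X] [TopologicalSpace Y] {x₀ : X} {y₀ : Y}
    (φ : C(X, Y)) (hφ : φ x₀ = y₀) (f : CZero Y y₀) : CZero X x₀ :=
  ⟨(f : C(Y, ℂ)).comp φ, by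
    have hf : (f : C(Y, ℂ)) y₀ = 0 := f.2
    show ((f : C(Y, ℂ)).comp φ) x₀ = 0
    simp [ContinuousMap.comp_apply, hφ, hf]⟩

/-- The conjugation action of `g : G` on (underlying functions of) configurations:
`(g·F)(f) = u g ∘ F (x ↦ f (g • x)) ∘ u g⁻¹`. -/
def smulConf {G : Type*} [Group G] {X : Type*} [TopologicalSpace X] {x₀ : X}
    [MulAction G X] [ContinuousConstSMul G X]
    (u : G →* (H ≃ₗᵢ[ℂ] H)) (hfix : ∀ g : G, g • x₀ = x₀) (g : G)
    (F : CZero X x₀ → (H →WOT[ℂ] H)) : CZero X x₀ → (H →WOT[ℂ] H) := fun f =>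
  (ContinuousLinearMapWOT.linearEquiv (σ := RingHom.id ℂ) (E := H) (F := H) ℂ).symm
    ((((u g).toContinuousLinearEquiv : H →L[ℂ] H)).comp
      (((((ContinuousLinearMapWOT.linearEquiv (σ := RingHom.id ℂ) (E := H) (F := H) ℂ).symm).symm
          (F (pullback ⟨fun y => g • y, continuous_const_smul g⟩ (hfix g) f)))).comp
        (((u g⁻¹).toContinuousLinearEquiv : H →L[ℂ] H))))

/-!
The homotopy is `(F, t) ↦ F ∘ (Φ t)*`. Each `(Φ t)*` is a star-algebra homomorphism, so
`F ∘ (Φ t)*` is again a configuration with the same rank bound. Since `C₀(X)` is not locally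
compact, composition `C(C₀(X), B(H)) × C(C₀(Y), C₀(X)) → C(C₀(Y), B(H))` need not be jointly
continuous; joint continuity in `(F, t)` comes instead from local compactness of `[0, 1]`: for a
compact neighbourhood `C` of `t` and compact `K ⊆ C₀(Y)`, the set of all `(Φ s)* f` with `s ∈ C`,
`f ∈ K` is compact in `C₀(X)`. Equivariance of each `Φ t` makes `(Φ t)*` commute with the
pullbacks along `g • ·`, hence with the conjugation action.
-/

namespace ContinuousMap

open Filter Set Topology

theorem continuous_comp_curry {T A B Z : Type*} [TopologicalSpace T] [TopologicalSpace A]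
    [TopologicalSpace B] [TopologicalSpace Z] [LocallyCompactSpace T] (Q : C(T × A, B)) :
    Continuous fun p : C(B, Z) × T => (p.1.comp Q).curry p.2 := by
  refine continuous_iff_continuousAt.2 fun ⟨F₀, t₀⟩ => ?_
  refine tendsto_nhds_compactOpen.2 fun K hK U hU h₀ => ?_
  have hW : ∀ᶠ t in 𝓝 t₀, MapsTo ((F₀.comp Q).curry t) K U :=
    (F₀.comp Q).curry.continuous.continuousAt.eventually (eventually_mapsTo hK hU h₀)
  obtain ⟨C, hCt₀, hCW, hC⟩ := local_compact_nhds hW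
  have hF : ∀ᶠ F : C(B, Z) in 𝓝 F₀, MapsTo F (Q '' (C ×ˢ K)) U :=
    eventually_mapsTo ((hC.prod hK).image Q.continuous) hU <| by
      rintro _ ⟨⟨t, a⟩, ⟨ht, ha⟩, rfl⟩
      exact hCW ht ha
  filter_upwards [prod_mem_nhds hF hCt₀]
  rintro ⟨F, t⟩ ⟨hFC, ht⟩ a ha
  exact hFC (mem_image_of_mem Q ⟨ht, ha⟩)

end ContinuousMap

section Pullback

variable {X Y Z : Type*} [TopologicalSpace X] [TopologicalSpace Y] [TopologicalSpace Z]
  {x₀ : X} {y₀ : Y} {z₀ : Z}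

theorem pullback_congr {φ φ' : C(X, Y)} (h : φ = φ') (hφ : φ x₀ = y₀) (hφ' : φ' x₀ = y₀)
    (f : CZero Y y₀) : pullback φ hφ f = pullback φ' hφ' f := by
  subst h
  rfl

theorem pullback_pullback (φ : C(X, Y)) (ψ : C(Y, Z)) (hφ : φ x₀ = y₀) (hψ : ψ y₀ = z₀)
    (f : CZero Z z₀) :
    pullback φ hφ (pullback ψ hψ f) = pullback (ψ.comp φ) (by simp [hφ, hψ]) f :=
  rfl

theorem continuous_pullback (φ : C(X, Y)) (hφ : φ x₀ = y₀) :
    Continuous (pullback φ hφ : CZero Y y₀ → CZero X x₀) :=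
  ((ContinuousMap.continuous_precomp φ).comp continuous_subtype_val).subtype_mk _

def pullbackHom (φ : C(X, Y)) (hφ : φ x₀ = y₀) : CZero Y y₀ →⋆ₙₐ[ℂ] CZero X x₀ where
  toFun := pullback φ hφ
  map_smul' _ _ := rfl
  map_zero' := rfl
  map_add' _ _ := rfl
  map_mul' _ _ := rfl
  map_star' _ := rfl

end Pullback

section Config

variable {X Y : Type*} [TopologicalSpace X] [TopologicalSpace Y] {x₀ : X} {y₀ : Y} {H}

theorem IsConfig.comp_pullback {F : C(CZero X x₀, H →WOT[ℂ] H)} (hF : IsConfig H F)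
    (φ : C(X, Y)) (hφ : φ x₀ = y₀) :
    IsConfig H (F.comp ⟨pullback φ hφ, continuous_pullback φ hφ⟩) := by
  obtain ⟨Ψ, hΨ, n, hn⟩ := hF
  exact ⟨Ψ.comp (pullbackHom φ hφ), fun f => hΨ _, n, fun f => hn _⟩

variable (H) in
def Config.map (φ : C(X, Y)) (hφ : φ x₀ = y₀) (F : Config H X x₀) : Config H Y y₀ :=
  ⟨F.1.comp ⟨pullback φ hφ, continuous_pullback φ hφ⟩, F.2.comp_pullback φ hφ⟩

theorem Config.coe_map (φ : C(X, Y)) (hφ : φ x₀ = y₀) (F : Config H X x₀) :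
    ⇑(Config.map H φ hφ F).1 = ⇑F.1 ∘ pullback φ hφ :=
  rfl

theorem Config.continuous_map_curry {T : Type*} [TopologicalSpace T] [LocallyCompactSpace T]
    (Φ : C(T × X, Y)) (hΦ : ∀ t, Φ (t, x₀) = y₀) :
    Continuous fun p : Config H X x₀ × T => Config.map H (Φ.curry p.2) (hΦ p.2) p.1 := by
  let Q : C(T × CZero Y y₀, CZero X x₀) :=
    ⟨fun p => pullback (Φ.curry p.1) (hΦ p.1) p.2,
      ((ContinuousMap.continuous_comp_curry Φ).comp
        ((continuous_subtype_val.comp continuous_snd).prodMk continuous_fst)).subtype_mk _⟩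
  exact (((ContinuousMap.continuous_comp_curry Q).comp
    (continuous_subtype_val.prodMap continuous_id)).subtype_mk _)

theorem Config.map_smulConf {G : Type*} [Group G] [MulAction G X] [ContinuousConstSMul G X]
    [MulAction G Y] [ContinuousConstSMul G Y] (u : G →* (H ≃ₗᵢ[ℂ] H))
    (hx : ∀ g : G, g • x₀ = x₀) (hy : ∀ g : G, g • y₀ = y₀) (g : G)
    (φ : C(X, Y)) (hφ : φ x₀ = y₀) (hφg : ∀ x, φ (g • x) = g • φ x) {F F' : Config H X x₀}
    (hF' : ⇑F'.1 = smulConf H u hx g ⇑F.1) :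
    ⇑(Config.map H φ hφ F').1 = smulConf H u hy g ⇑(Config.map H φ hφ F).1 := by
  let σX : C(X, X) := ⟨(g • ·), continuous_const_smul g⟩
  let σY : C(Y, Y) := ⟨(g • ·), continuous_const_smul g⟩
  have hcomm : φ.comp σX = σY.comp φ := ContinuousMap.ext hφg
  rw [Config.coe_map, Config.coe_map, hF']
  funext f
  have hpull : pullback σX (hx g) (pullback φ hφ f) = pullback φ hφ (pullback σY (hy g) f) := by
    simp only [pullback_pullback]
    exact pullback_congr hcomm _ _ f
  simp only [smulConf, Function.comp_apply]
  rw [hpull]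

end Config

theorem stmt8
    {G : Type*} [Group G]
    {X Y : Type*} [TopologicalSpace X] [TopologicalSpace Y]
    [MulAction G X] [ContinuousConstSMul G X] [MulAction G Y] [ContinuousConstSMul G Y]
    {x₀ : X} {y₀ : Y} (hx : ∀ g : G, g • x₀ = x₀) (hy : ∀ g : G, g • y₀ = y₀)
    (H : Type*) [NormedAddCommGroup H] [InnerProductSpace ℂ H] [CompleteSpace H]
    (u : G →* (H ≃ₗᵢ[ℂ] H))
    (φ₀ φ₁ : C(X, Y)) (hφ₀b : φ₀ x₀ = y₀) (hφ₁b : φ₁ x₀ = y₀)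
    (Φ : ContinuousMap.Homotopy φ₀ φ₁)
    (hΦb : ∀ t : unitInterval, Φ (t, x₀) = y₀)
    (hΦe : ∀ (t : unitInterval) (g : G) (x : X), Φ (t, g • x) = g • Φ (t, x)) :
    ∃ Hht : Config H X x₀ × unitInterval → Config H Y y₀,
      Continuous Hht ∧
      (∀ (F : Config H X x₀) (f : CZero Y y₀),
        (Hht (F, 0)).1 f = F.1 (pullback φ₀ hφ₀b f)) ∧
      (∀ (F : Config H X x₀) (f : CZero Y y₀),
        (Hht (F, 1)).1 f = F.1 (pullback φ₁ hφ₁b f)) ∧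
      (∀ (g : G) (t : unitInterval) (F F' : Config H X x₀),
        ⇑F'.1 = smulConf H u hx g ⇑F.1 →
        ⇑(Hht (F', t)).1 = smulConf H u hy g ⇑(Hht (F, t)).1) := by
  refine ⟨fun p => Config.map H (Φ.curry p.2) (hΦb p.2) p.1,
    Config.continuous_map_curry Φ.toContinuousMap hΦb, ?_, ?_, ?_⟩
  · exact fun F f => congrArg F.1 (pullback_congr Φ.curry_zero (hΦb 0) hφ₀b f)
  · exact fun F f => congrArg F.1 (pullback_congr Φ.curry_one (hΦb 1) hφ₁b f)
  · exact fun g t F F' => Config.map_smulConf u hx hy g (Φ.curry t) (hΦb t) (hΦe t g)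

end
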